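/- arXiv:2008.12744 — 4 statements merged into one kernel-verified Lean document; each statement's English description precedes it below -/
import Mathlib

section
/- For every x ≥ 0, y ≥ 0 and every admissible control r, there exists a unique pair of continuous functions S, I : [0,∞) → ℝ satisfying the controlled SIR integral equations S(t) = x − ∫₀ᵗ (β S(s) I(s) + r(s) S(s)) ds and I(t) = y + ∫₀ᵗ (β S(s) I(s) − γ I(s)) ds for all t ≥ 0. Moreover 0 ≤ S(t) ≤ x + y and 0 ≤ I(t) ≤ x + y for all t ≥ 0, S is nonincreasing, and S, I, and the derivative İ are Lipschitz continuous on [0,∞). -/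
/-!
Truncating the state to the square `[0, x + y]²` makes the SIR field bounded and globally
Lipschitz in the state, although it is only measurable in time. Picard iteration still works on
every `[0, T]`: the `n`-th iterate of the integral operator is Lipschitz with constant
`(L T)ⁿ / n!`, and the same iterated estimate gives uniqueness (Grönwall), so the solutions on
`[0, n]` glue to a global one. The truncated solution never leaves the square, because `S` and `I`
cannot become negative (their rates vanish with them) and `S + I` is nonincreasing; hence it
solves the original system. Bounded states and rates then give the Lipschitz bounds.
-/

open MeasureTheory Set Filter Topology
open scoped Classical

noncomputable section

/-- An admissible vaccination-rate control: a measurable `r : ℝ → ℝ` with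
`0 ≤ r t ≤ 1` for a.e. `t ≥ 0`. -/
def Admissible (r : ℝ → ℝ) : Prop :=
  Measurable r ∧ ∀ᵐ t : ℝ ∂volume, 0 ≤ t → 0 ≤ r t ∧ r t ≤ 1

/-- `S, I` is a solution of the controlled SIR system with parameters `β, γ`,
control `r`, and initial data `x, y`:  they are continuous on `[0,∞)` and satisfy
`S t = x - ∫₀ᵗ (β S I + r S)` and `I t = y + ∫₀ᵗ (β S I - γ I)` for all `t ≥ 0`. -/
def IsSIRSol (β γ : ℝ) (r : ℝ → ℝ) (x y : ℝ) (S I : ℝ → ℝ) : Prop :=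
  ContinuousOn S (Ici 0) ∧ ContinuousOn I (Ici 0) ∧
  (∀ t : ℝ, 0 ≤ t → S t = x - ∫ s in (0:ℝ)..t, (β * S s * I s + r s * S s)) ∧
  (∀ t : ℝ, 0 ≤ t → I t = y + ∫ s in (0:ℝ)..t, (β * S s * I s - γ * I s))

/-- The susceptible component `S^r` of the solution of the controlled SIR system
(chosen via choice; it is unique on `[0,∞)`). -/
def sirS (β γ : ℝ) (r : ℝ → ℝ) (x y : ℝ) : ℝ → ℝ :=
  if h : ∃ p : (ℝ → ℝ) × (ℝ → ℝ), IsSIRSol β γ r x y p.1 p.2 then h.choose.1 else 0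

/-- The infected component `I^r` of the solution of the controlled SIR system. -/
def sirI (β γ : ℝ) (r : ℝ → ℝ) (x y : ℝ) : ℝ → ℝ :=
  if h : ∃ p : (ℝ → ℝ) × (ℝ → ℝ), IsSIRSol β γ r x y p.1 p.2 then h.choose.2 else 0

/-- The eradication time `u^r(x,y) = min { t ≥ 0 : I^r(t) = μ }`. -/
def eradTime (β γ μ : ℝ) (r : ℝ → ℝ) (x y : ℝ) : ℝ :=
  sInf {t : ℝ | 0 ≤ t ∧ sirI β γ r x y t = μ}

/-- The value function `u(x,y) = inf { u^r(x,y) : r admissible }`. -/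
def value (β γ μ : ℝ) (x y : ℝ) : ℝ :=
  sInf {T : ℝ | ∃ r : ℝ → ℝ, Admissible r ∧ T = eradTime β γ μ r x y}

/-- The triangle `T_{N,δ} = {(x,y) : x ≥ δ, y ≥ μ + δ, x + y ≤ N}`. -/
def Triangle (μ N δ : ℝ) : Set (ℝ × ℝ) :=
  {p : ℝ × ℝ | δ ≤ p.1 ∧ μ + δ ≤ p.2 ∧ p.1 + p.2 ≤ N}

/-- The partial derivative `∂ₓ u^r(z,w)` of the eradication time. -/
def uDx (β γ μ : ℝ) (r : ℝ → ℝ) (z w : ℝ) : ℝ :=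
  deriv (fun a => eradTime β γ μ r a w) z

/-- The partial derivative `∂_y u^r(z,w)` of the eradication time. -/
def uDy (β γ μ : ℝ) (r : ℝ → ℝ) (z w : ℝ) : ℝ :=
  deriv (fun b => eradTime β γ μ r z b) w

/-- The switching control `r_τ`: `0` on `[0,τ]` and `1` on `(τ,∞)`. -/
def switchCtrl (τ : ℝ) : ℝ → ℝ := fun t => if t ≤ τ then 0 else 1


open scoped NNReal

section IntegralEquation

variable {E : Type*} [NormedAddCommGroup E]

theorem intervalIntegrable_of_norm_le {g : ℝ → E} (hg : AEStronglyMeasurable g) {B : ℝ}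
    (hB : ∀ s, ‖g s‖ ≤ B) (a b : ℝ) : IntervalIntegrable g volume a b :=
  intervalIntegrable_const.mono_fun hg.restrict
    (ae_of_all _ fun s => (hB s).trans (Real.le_norm_self B))

variable [NormedSpace ℝ E]

theorem le_mul_pow_div_factorial_of_le_mul_integral {φ : ℕ → ℝ → ℝ} {L D T : ℝ} (hL : 0 ≤ L)
    (hφ : ∀ n, IntervalIntegrable (φ n) volume 0 T) (h₀ : ∀ t ∈ Icc 0 T, φ 0 t ≤ D)
    (hsucc : ∀ n, ∀ t ∈ Icc 0 T, φ (n + 1) t ≤ L * ∫ s in 0..t, φ n s) (n : ℕ) :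
    ∀ t ∈ Icc 0 T, φ n t ≤ D * (L * t) ^ n / n.factorial := by
  induction n with
  | zero => simpa using h₀
  | succ n ih =>
    intro t ht
    have hmono : ∫ s in 0..t, φ n s ≤ ∫ s in 0..t, D * L ^ n / n.factorial * s ^ n := by
      refine intervalIntegral.integral_mono_on ht.1
        ((hφ n).mono_set (uIcc_subset_uIcc left_mem_uIcc (mem_uIcc_of_le ht.1 ht.2)))
        (by apply Continuous.intervalIntegrable; fun_prop) fun s hs => ?_
      calc φ n s ≤ D * (L * s) ^ n / n.factorial := ih s ⟨hs.1, hs.2.trans ht.2⟩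
        _ = D * L ^ n / n.factorial * s ^ n := by ring
    calc φ (n + 1) t ≤ L * ∫ s in 0..t, φ n s := hsucc n t ht
      _ ≤ L * ∫ s in 0..t, D * L ^ n / n.factorial * s ^ n := by gcongr
      _ = D * (L * t) ^ (n + 1) / (n + 1).factorial := by
        rw [intervalIntegral.integral_const_mul, integral_pow, Nat.factorial_succ]
        push_cast
        field_simp
        ring

-- Grönwall's inequality with zero initial value.
theorem nonpos_of_le_mul_integral {φ : ℝ → ℝ} {L T : ℝ} (hL : 0 ≤ L) (hφ : ContinuousOn φ (Icc 0 T))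
    (h : ∀ t ∈ Icc 0 T, φ t ≤ L * ∫ s in 0..t, φ s) : ∀ t ∈ Icc 0 T, φ t ≤ 0 := by
  intro t ht
  obtain ⟨D, hD⟩ := isCompact_Icc.exists_bound_of_continuousOn hφ
  have hbound := le_mul_pow_div_factorial_of_le_mul_integral (φ := fun _ => φ) hL
    (fun _ => hφ.intervalIntegrable_of_Icc (ht.1.trans ht.2))
    (fun s hs => (le_abs_self _).trans (hD s hs)) (fun _ => h)
  have hlim : Tendsto (fun n => D * (L * t) ^ n / n.factorial) atTop (𝓝 0) := by
    simpa [mul_div_assoc] using (FloorSemiring.tendsto_pow_div_factorial_atTop (L * t)).const_mul D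
  exact le_of_tendsto_of_tendsto' tendsto_const_nhds hlim fun n => hbound n t ht

theorem norm_integral_sub_le_mul_integral {F : ℝ → E → E} {a b : ℝ → E} {L t : ℝ} (ht : 0 ≤ t)
    (ha : IntervalIntegrable (fun s => F s (a s)) volume 0 t)
    (hb : IntervalIntegrable (fun s => F s (b s)) volume 0 t)
    (hab : IntervalIntegrable (fun s => ‖a s - b s‖) volume 0 t)
    (hlip : ∀ s ∈ Icc 0 t, ‖F s (a s) - F s (b s)‖ ≤ L * ‖a s - b s‖) :
    ‖(∫ s in 0..t, F s (a s)) - ∫ s in 0..t, F s (b s)‖ ≤ L * ∫ s in 0..t, ‖a s - b s‖ :=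
  calc ‖(∫ s in 0..t, F s (a s)) - ∫ s in 0..t, F s (b s)‖
      = ‖∫ s in 0..t, (F s (a s) - F s (b s))‖ := by rw [intervalIntegral.integral_sub ha hb]
    _ ≤ ∫ s in 0..t, ‖F s (a s) - F s (b s)‖ := intervalIntegral.norm_integral_le_integral_norm ht
    _ ≤ ∫ s in 0..t, L * ‖a s - b s‖ :=
      intervalIntegral.integral_mono_on ht (ha.sub hb).norm (hab.const_mul L) hlip
    _ = L * ∫ s in 0..t, ‖a s - b s‖ := intervalIntegral.integral_const_mul _ _

theorem eqOn_Icc_of_eq_add_integral {F : ℝ → E → E} {u v : ℝ → E} {u₀ : E} {L T : ℝ} (hL : 0 ≤ L)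
    (hu : ContinuousOn u (Icc 0 T)) (hv : ContinuousOn v (Icc 0 T))
    (hFu : IntervalIntegrable (fun s => F s (u s)) volume 0 T)
    (hFv : IntervalIntegrable (fun s => F s (v s)) volume 0 T)
    (hlip : ∀ s ∈ Icc 0 T, ‖F s (u s) - F s (v s)‖ ≤ L * ‖u s - v s‖)
    (hu_eq : ∀ t ∈ Icc 0 T, u t = u₀ + ∫ s in 0..t, F s (u s))
    (hv_eq : ∀ t ∈ Icc 0 T, v t = u₀ + ∫ s in 0..t, F s (v s)) :
    EqOn u v (Icc 0 T) := by
  suffices h : ∀ t ∈ Icc 0 T, ‖u t - v t‖ ≤ 0 from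
    fun t ht => sub_eq_zero.1 (norm_le_zero_iff.1 (h t ht))
  refine nonpos_of_le_mul_integral hL (hu.sub hv).norm fun t ht => ?_
  have hsub : uIcc 0 t ⊆ uIcc 0 T := uIcc_subset_uIcc left_mem_uIcc (mem_uIcc_of_le ht.1 ht.2)
  rw [hu_eq t ht, hv_eq t ht, add_sub_add_left_eq_sub]
  exact norm_integral_sub_le_mul_integral ht.1 (hFu.mono_set hsub) (hFv.mono_set hsub)
    ((hu.sub hv).norm.intervalIntegrable_of_Icc (ht.1.trans ht.2) |>.mono_set hsub)
    fun s hs => hlip s ⟨hs.1, hs.2.trans ht.2⟩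

theorem sub_eq_integral_of_eq_add_integral {f g : ℝ → E} {c : E} {a t t' : ℝ}
    (hg : ∀ t ∈ Ici a, IntervalIntegrable g volume a t)
    (hf : ∀ t ∈ Ici a, f t = c + ∫ s in a..t, g s) (ht : t ∈ Ici a) (ht' : t' ∈ Ici a) :
    f t - f t' = ∫ s in t'..t, g s := by
  rw [hf t ht, hf t' ht', add_sub_add_left_eq_sub,
    intervalIntegral.integral_interval_sub_left (hg t ht) (hg t' ht')]

theorem lipschitzOnWith_of_eq_add_integral {f g : ℝ → E} {c : E} {a : ℝ} {K : ℝ≥0}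
    (hg : ∀ t ∈ Ici a, IntervalIntegrable g volume a t) (hgK : ∀ s ∈ Ici a, ‖g s‖ ≤ K)
    (hf : ∀ t ∈ Ici a, f t = c + ∫ s in a..t, g s) : LipschitzOnWith K f (Ici a) := by
  refine LipschitzOnWith.of_dist_le_mul fun t ht t' ht' => ?_
  rw [dist_eq_norm, sub_eq_integral_of_eq_add_integral hg hf ht ht', Real.dist_eq]
  refine intervalIntegral.norm_integral_le_of_norm_le_const fun s hs => hgK s ?_
  exact (le_min ht' ht).trans (uIoc_subset_uIcc hs).1

theorem hasDerivWithinAt_of_eq_add_integral [CompleteSpace E] {f g : ℝ → E} {c : E} {a t : ℝ}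
    (hg : Continuous g) (hf : ∀ t ∈ Ici a, f t = c + ∫ s in a..t, g s) (ht : t ∈ Ici a) :
    HasDerivWithinAt f (g t) (Ici a) t :=
  ((hg.integral_hasStrictDerivAt a t).hasDerivAt.const_add c).hasDerivWithinAt.congr hf (hf t ht)

theorem antitoneOn_of_eq_add_integral {f g : ℝ → ℝ} {c a : ℝ}
    (hg : ∀ t ∈ Ici a, IntervalIntegrable g volume a t) (hg₀ : ∀ s ∈ Ici a, g s ≤ 0)
    (hf : ∀ t ∈ Ici a, f t = c + ∫ s in a..t, g s) : AntitoneOn f (Ici a) := by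
  intro t' ht' t ht htt'
  rw [← sub_nonpos, sub_eq_integral_of_eq_add_integral hg hf ht ht']
  simpa using intervalIntegral.integral_mono_on htt' ((hg t' ht').symm.trans (hg t ht))
    intervalIntegrable_const fun s hs => hg₀ s (ht'.out.trans hs.1)

theorem nonneg_of_eq_add_integral {f g : ℝ → ℝ} {c a b : ℝ} (hab : a ≤ b) (hc : 0 ≤ c)
    (hf : ContinuousOn f (Icc a b)) (hg : IntervalIntegrable g volume a b)
    (heq : ∀ t ∈ Icc a b, f t = c + ∫ s in a..t, g s) (hneg : ∀ s ∈ Icc a b, f s < 0 → 0 ≤ g s) :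
    0 ≤ f b := by
  by_contra! hb
  let A := Icc a b ∩ f ⁻¹' Ici 0
  have hA : IsClosed A := hf.preimage_isClosed_of_isClosed isClosed_Icc isClosed_Ici
  have haA : a ∈ A := ⟨left_mem_Icc.2 hab, by simpa [heq a (left_mem_Icc.2 hab)] using hc⟩
  have hAbdd : BddAbove A := bddAbove_Icc.mono inter_subset_left
  -- `t₀` is the last time at which `f ≥ 0`; on `(t₀, b]` the integrand is nonnegative
  set t₀ := sSup A
  have ht₀ : t₀ ∈ A := hA.csSup_mem ⟨a, haA⟩ hAbdd
  have ht₀b : t₀ < b := lt_of_le_of_ne ht₀.1.2 fun h => (h ▸ ht₀.2 : 0 ≤ f b).not_gt hb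
  have hpos : ∀ s ∈ Ioo t₀ b, 0 ≤ g s := fun s hs => hneg s ⟨ht₀.1.1.trans hs.1.le, hs.2.le⟩
    (not_le.1 fun h => hs.1.not_ge (le_csSup hAbdd ⟨⟨ht₀.1.1.trans hs.1.le, hs.2.le⟩, h⟩))
  have hint : 0 ≤ ∫ s in t₀..b, g s := by
    have hg' := hg.mono_set (uIcc_subset_uIcc (mem_uIcc_of_le ht₀.1.1 ht₀.1.2) right_mem_uIcc)
    simpa using
      intervalIntegral.integral_mono_on_of_le_Ioo ht₀b.le intervalIntegrable_const hg' hpos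
  have hdiff : f b - f t₀ = ∫ s in t₀..b, g s := by
    rw [heq b (right_mem_Icc.2 hab), heq t₀ ht₀.1, add_sub_add_left_eq_sub,
      intervalIntegral.integral_interval_sub_left hg
        (hg.mono_set (uIcc_subset_uIcc left_mem_uIcc (mem_uIcc_of_le ht₀.1.1 ht₀.1.2)))]
  have : 0 ≤ f t₀ := ht₀.2
  linarith

variable [CompleteSpace E] {F : ℝ → E → E} {B : ℝ} {L : ℝ≥0}

theorem exists_continuous_eq_add_integral_Icc
    (hmeas : ∀ u : ℝ → E, Continuous u → AEStronglyMeasurable (fun s => F s (u s)))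
    (hbdd : ∀ s p, ‖F s p‖ ≤ B) (hlip : ∀ s, LipschitzWith L (F s)) (u₀ : E) {T : ℝ} (hT : 0 ≤ T) :
    ∃ u : ℝ → E, Continuous u ∧ ∀ t ∈ Icc 0 T, u t = u₀ + ∫ s in 0..t, F s (u s) := by
  let ext : C(Icc 0 T, E) → C(ℝ, E) := ContinuousMap.IccExtend hT
  have hint (w : C(Icc 0 T, E)) (a b : ℝ) :
      IntervalIntegrable (fun s => F s (ext w s)) volume a b :=
    intervalIntegrable_of_norm_le (hmeas _ (ext w).continuous) (fun s => hbdd s _) a b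
  let Φ : C(Icc 0 T, E) → C(Icc 0 T, E) := fun w =>
    ⟨fun t => u₀ + ∫ s in 0..(t : ℝ), F s (ext w s),
      continuous_const.add ((intervalIntegral.continuous_primitive (hint w) 0).comp
        continuous_subtype_val)⟩
  have hdist (n : ℕ) (w w' : C(Icc 0 T, E)) :
      dist (Φ^[n] w) (Φ^[n] w') ≤ (L * T) ^ n / n.factorial * dist w w' := by
    let φ : ℕ → ℝ → ℝ := fun k s => ‖ext (Φ^[k] w) s - ext (Φ^[k] w') s‖
    have hφ (k : ℕ) (t : Icc 0 T) : φ k t = dist (Φ^[k] w t) (Φ^[k] w' t) := by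
      simp [φ, ext, dist_eq_norm]
    have hstep (k : ℕ) (t : ℝ) (ht : t ∈ Icc 0 T) : φ (k + 1) t ≤ L * ∫ s in 0..t, φ k s := by
      have hΦ (w₀ : C(Icc 0 T, E)) : ext (Φ w₀) t = u₀ + ∫ s in 0..t, F s (ext w₀ s) := by
        simp [ext, IccExtend_of_mem _ _ ht, Φ]
      simp only [φ, Function.iterate_succ_apply', hΦ, add_sub_add_left_eq_sub]
      exact norm_integral_sub_le_mul_integral ht.1 (hint _ _ _) (hint _ _ _)
        (((ext _).continuous.sub (ext _).continuous).norm.intervalIntegrable _ _)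
        fun s _ => by simpa [dist_eq_norm] using (hlip s).dist_le_mul _ _
    have hbound := le_mul_pow_div_factorial_of_le_mul_integral (φ := φ) (D := dist w w') L.2
      (fun k => ((ext _).continuous.sub (ext _).continuous).norm.intervalIntegrable _ _)
      (fun t ht => (hφ 0 ⟨t, ht⟩).trans_le (ContinuousMap.dist_apply_le_dist _)) hstep n
    rw [ContinuousMap.dist_le (by positivity)]
    intro t
    have ht := t.2
    calc dist (Φ^[n] w t) (Φ^[n] w' t) = φ n t := (hφ n t).symm
      _ ≤ dist w w' * (L * t) ^ n / n.factorial := hbound t ht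
      _ ≤ dist w w' * (L * T) ^ n / n.factorial := by
        gcongr
        exacts [mul_nonneg L.2 ht.1, ht.2]
      _ = (L * T) ^ n / n.factorial * dist w w' := by ring
  obtain ⟨n, hn⟩ : ∃ n : ℕ, (L * T) ^ n / n.factorial < 1 :=
    ((FloorSemiring.tendsto_pow_div_factorial_atTop _).eventually_lt_const one_pos).exists
  have hcontr : ContractingWith ⟨(L * T) ^ n / n.factorial, by positivity⟩ Φ^[n] :=
    ⟨hn, LipschitzWith.of_dist_le_mul (hdist n)⟩
  let U := ContractingWith.fixedPoint _ hcontr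
  refine ⟨ext U, (ext U).continuous, fun t ht => ?_⟩
  have hfix : Φ U = U := hcontr.isFixedPt_fixedPoint_iterate
  calc ext U t = Φ U ⟨t, ht⟩ := by rw [hfix]; simp [ext, IccExtend_of_mem _ _ ht]
    _ = u₀ + ∫ s in 0..t, F s (ext U s) := rfl

theorem exists_continuous_eq_add_integral
    (hmeas : ∀ u : ℝ → E, Continuous u → AEStronglyMeasurable (fun s => F s (u s)))
    (hbdd : ∀ s p, ‖F s p‖ ≤ B) (hlip : ∀ s, LipschitzWith L (F s)) (u₀ : E) :
    ∃ u : ℝ → E, Continuous u ∧ ∀ t, 0 ≤ t → u t = u₀ + ∫ s in 0..t, F s (u s) := by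
  choose v hv hv_eq using fun n : ℕ =>
    exists_continuous_eq_add_integral_Icc hmeas hbdd hlip u₀ n.cast_nonneg
  have hint (n : ℕ) (a b : ℝ) : IntervalIntegrable (fun s => F s (v n s)) volume a b :=
    intervalIntegrable_of_norm_le (hmeas _ (hv n)) (fun s => hbdd s _) a b
  have hagree (m n : ℕ) {t : ℝ} (ht : t ∈ Icc 0 (m : ℝ)) (htn : t ≤ n) : v m t = v n t :=
    eqOn_Icc_of_eq_add_integral L.2 (hv m).continuousOn (hv n).continuousOn (hint m 0 t)
      (hint n 0 t) (fun s _ => by simpa [dist_eq_norm] using (hlip s).dist_le_mul _ _)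
      (fun s hs => hv_eq m s ⟨hs.1, hs.2.trans ht.2⟩)
      (fun s hs => hv_eq n s ⟨hs.1, hs.2.trans htn⟩) ⟨ht.1, le_rfl⟩
  -- `v m` and `v n` agree only on `[0, min m n]`, hence the clamping `max t 0`
  let u : ℝ → E := fun t => v ⌈t⌉₊ (max t 0)
  have hu (n : ℕ) {t : ℝ} (ht : t < n) : u t = v n (max t 0) :=
    hagree _ _ ⟨le_max_right _ _, max_le (Nat.le_ceil t) (Nat.cast_nonneg _)⟩
      (max_le ht.le (Nat.cast_nonneg _))
  have hlt (t : ℝ) : t < (⌈t⌉₊ + 1 : ℕ) := by push_cast; linarith [Nat.le_ceil t]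
  refine ⟨u, continuous_iff_continuousAt.2 fun t => ?_, fun t ht => ?_⟩
  · exact ((hv _).comp (continuous_id.max continuous_const)).continuousAt.congr
      (eventually_lt_nhds (hlt t) |>.mono fun s hs => (hu _ hs).symm)
  · have htn := hlt t
    rw [hu _ htn, max_eq_left ht, hv_eq _ t ⟨ht, htn.le⟩]
    refine congrArg _ (intervalIntegral.integral_congr fun s hs => ?_)
    rw [uIcc_of_le ht] at hs
    simp only [hu _ (hs.2.trans_lt htn), max_eq_left hs.1]

end IntegralEquation

section Prod

variable {E F : Type*} [NormedAddCommGroup E] [NormedSpace ℝ E] [NormedAddCommGroup F]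
  [NormedSpace ℝ F] {f : ℝ → E × F} {a b : ℝ}

protected theorem IntervalIntegrable.fst (hf : IntervalIntegrable f volume a b) :
    IntervalIntegrable (fun s => (f s).1) volume a b :=
  ⟨hf.1.fst, hf.2.fst⟩

protected theorem IntervalIntegrable.snd (hf : IntervalIntegrable f volume a b) :
    IntervalIntegrable (fun s => (f s).2) volume a b :=
  ⟨hf.1.snd, hf.2.snd⟩

theorem fst_intervalIntegral [CompleteSpace F] (hf : IntervalIntegrable f volume a b) :
    (∫ s in a..b, f s).1 = ∫ s in a..b, (f s).1 := by
  simp only [intervalIntegral, Prod.fst_sub, fst_integral hf.1, fst_integral hf.2]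

theorem snd_intervalIntegral [CompleteSpace E] (hf : IntervalIntegrable f volume a b) :
    (∫ s in a..b, f s).2 = ∫ s in a..b, (f s).2 := by
  simp only [intervalIntegral, Prod.snd_sub, snd_integral hf.1, snd_integral hf.2]

end Prod

section SIR

variable {β γ : ℝ} {ρ : ℝ → ℝ}

/-- The SIR vector field at time `s` and state `p = (S, I)`. -/
def sirField (β γ : ℝ) (ρ : ℝ → ℝ) (s : ℝ) (p : ℝ × ℝ) : ℝ × ℝ :=
  (-(β * p.1 * p.2 + ρ s * p.1), β * p.1 * p.2 - γ * p.2)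

theorem measurable_uncurry_sirField (hρ : Measurable ρ) :
    Measurable (Function.uncurry (sirField β γ ρ)) := by
  unfold sirField Function.uncurry
  fun_prop

theorem norm_sirField_le (hβ : 0 ≤ β) (hγ : 0 ≤ γ) {s R : ℝ} (hρ : |ρ s| ≤ 1) {p : ℝ × ℝ}
    (hp : ‖p‖ ≤ R) : ‖sirField β γ ρ s p‖ ≤ (β * R + 1 + γ) * R := by
  obtain ⟨h₁, h₂⟩ := norm_prod_le_iff.1 hp
  rw [Real.norm_eq_abs] at h₁ h₂
  have hR : 0 ≤ R := (abs_nonneg _).trans h₁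
  have hβR : |β * p.1 * p.2| ≤ β * R * R := by
    rw [abs_mul, abs_mul, abs_of_nonneg hβ]
    gcongr
  refine norm_prod_le_iff.2 ⟨?_, ?_⟩ <;> simp only [sirField, Real.norm_eq_abs]
  · calc |-(β * p.1 * p.2 + ρ s * p.1)| ≤ |β * p.1 * p.2| + |ρ s| * |p.1| := by
          rw [abs_neg, ← abs_mul]; exact abs_add_le _ _
      _ ≤ β * R * R + 1 * R := by gcongr
      _ ≤ (β * R + 1 + γ) * R := by nlinarith
  · calc |β * p.1 * p.2 - γ * p.2| ≤ |β * p.1 * p.2| + γ * |p.2| :=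
          (abs_sub _ _).trans_eq (by rw [abs_mul γ, abs_of_nonneg hγ])
      _ ≤ β * R * R + γ * R := by gcongr
      _ ≤ (β * R + 1 + γ) * R := by nlinarith

theorem lipschitzOnWith_sirField (hβ : 0 ≤ β) (hγ : 0 ≤ γ) {s : ℝ} (hρ : |ρ s| ≤ 1) (R : ℝ) :
    LipschitzOnWith (2 * β * R + 1 + γ).toNNReal (sirField β γ ρ s) (Metric.closedBall 0 R) := by
  refine LipschitzOnWith.of_dist_le' fun p hp q hq => ?_
  rw [mem_closedBall_zero_iff] at hp hq
  have hp₁ : |p.1| ≤ R := (norm_fst_le p).trans hp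
  have hq₂ : |q.2| ≤ R := (norm_snd_le q).trans hq
  have hR : 0 ≤ R := (abs_nonneg _).trans hp₁
  set d := dist p q
  have hd₁ : |p.1 - q.1| ≤ d := le_max_left _ _
  have hd₂ : |p.2 - q.2| ≤ d := le_max_right _ _
  have hd : 0 ≤ d := dist_nonneg
  have hprod : β * |p.1 * p.2 - q.1 * q.2| ≤ β * (2 * R * d) := by
    gcongr
    calc |p.1 * p.2 - q.1 * q.2| = |p.1 * (p.2 - q.2) + q.2 * (p.1 - q.1)| := by ring_nf
      _ ≤ |p.1| * |p.2 - q.2| + |q.2| * |p.1 - q.1| := by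
          rw [← abs_mul, ← abs_mul]; exact abs_add_le _ _
      _ ≤ R * d + R * d := by gcongr
      _ = 2 * R * d := by ring
  rw [Prod.dist_eq, Real.dist_eq, Real.dist_eq]
  refine max_le ?_ ?_ <;> simp only [sirField]
  · calc |-(β * p.1 * p.2 + ρ s * p.1) - -(β * q.1 * q.2 + ρ s * q.1)|
        = |-(β * (p.1 * p.2 - q.1 * q.2) + ρ s * (p.1 - q.1))| := by ring_nf
      _ ≤ β * |p.1 * p.2 - q.1 * q.2| + |ρ s| * |p.1 - q.1| := by
          rw [abs_neg]
          exact (abs_add_le _ _).trans_eq (by rw [abs_mul, abs_mul, abs_of_nonneg hβ])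
      _ ≤ β * (2 * R * d) + 1 * d := by gcongr
      _ ≤ (2 * β * R + 1 + γ) * d := by nlinarith
  · calc |β * p.1 * p.2 - γ * p.2 - (β * q.1 * q.2 - γ * q.2)|
        = |β * (p.1 * p.2 - q.1 * q.2) - γ * (p.2 - q.2)| := by ring_nf
      _ ≤ β * |p.1 * p.2 - q.1 * q.2| + γ * |p.2 - q.2| := by
          refine (abs_sub _ _).trans_eq ?_
          rw [abs_mul, abs_mul, abs_of_nonneg hβ, abs_of_nonneg hγ]
      _ ≤ β * (2 * R * d) + γ * d := by gcongr
      _ ≤ (2 * β * R + 1 + γ) * d := by nlinarith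

/-- Composing with this projection makes the SIR field bounded and globally Lipschitz. -/
def projSquare (M : ℝ) (hM : 0 ≤ M) (p : ℝ × ℝ) : ℝ × ℝ :=
  (projIcc 0 M hM p.1, projIcc 0 M hM p.2)

section projSquare

variable {M : ℝ} (hM : 0 ≤ M)

theorem lipschitzWith_projSquare : LipschitzWith 1 (projSquare M hM) := by
  have h := (LipschitzWith.subtype_val _).comp (LipschitzWith.projIcc hM)
  unfold projSquare
  simpa [Function.comp_def] using
    (h.comp LipschitzWith.prod_fst).prodMk (h.comp LipschitzWith.prod_snd)

theorem projSquare_mem (p : ℝ × ℝ) : projSquare M hM p ∈ Icc 0 M ×ˢ Icc 0 M :=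
  ⟨(projIcc 0 M hM p.1).2, (projIcc 0 M hM p.2).2⟩

theorem projSquare_eq_self {p : ℝ × ℝ} (hp : p ∈ Icc 0 M ×ˢ Icc 0 M) : projSquare M hM p = p := by
  simp [projSquare, projIcc_of_mem hM hp.1, projIcc_of_mem hM hp.2]

end projSquare

theorem norm_le_of_mem_square {M : ℝ} {p : ℝ × ℝ} (hp : p ∈ Icc 0 M ×ˢ Icc 0 M) : ‖p‖ ≤ M :=
  norm_prod_le_iff.2 ⟨by rw [Real.norm_eq_abs, abs_of_nonneg hp.1.1]; exact hp.1.2,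
    by rw [Real.norm_eq_abs, abs_of_nonneg hp.2.1]; exact hp.2.2⟩

theorem mem_square_of_eq_add_integral_projSquare (hγ : 0 ≤ γ) (hρ : ∀ s, ρ s ∈ Icc (0 : ℝ) 1)
    {x y : ℝ} (hx : 0 ≤ x) (hy : 0 ≤ y) {u : ℝ → ℝ × ℝ} (hu : Continuous u)
    (hint : ∀ t, IntervalIntegrable
      (fun s => sirField β γ ρ s (projSquare (x + y) (add_nonneg hx hy) (u s))) volume 0 t)
    (heq : ∀ t, 0 ≤ t →
      u t = (x, y) + ∫ s in 0..t, sirField β γ ρ s (projSquare (x + y) (add_nonneg hx hy) (u s)))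
    {t : ℝ} (ht : 0 ≤ t) : u t ∈ Icc 0 (x + y) ×ˢ Icc 0 (x + y) := by
  set c := fun s => projSquare (x + y) (add_nonneg hx hy) (u s)
  set G := fun s => sirField β γ ρ s (c s)
  have hc (s : ℝ) : c s ∈ Icc 0 (x + y) ×ˢ Icc 0 (x + y) := projSquare_mem _ (u s)
  have hS (τ : ℝ) (hτ : 0 ≤ τ) : (u τ).1 = x + ∫ s in 0..τ, (G s).1 := by
    rw [heq τ hτ, Prod.fst_add, fst_intervalIntegral (hint τ)]
  have hI (τ : ℝ) (hτ : 0 ≤ τ) : (u τ).2 = y + ∫ s in 0..τ, (G s).2 := by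
    rw [heq τ hτ, Prod.snd_add, snd_intervalIntegral (hint τ)]
  have hS₀ : 0 ≤ (u t).1 := by
    refine nonneg_of_eq_add_integral ht hx (continuous_fst.comp hu).continuousOn (hint t).fst
      (fun s hs => hS s hs.1) fun s _ hs => ?_
    have hcs : (c s).1 = 0 := by
      simp [c, projSquare, projIcc_of_le_left _ (show (u s).1 ≤ 0 from hs.le)]
    simp [G, sirField, hcs]
  have hI₀ : 0 ≤ (u t).2 := by
    refine nonneg_of_eq_add_integral ht hy (continuous_snd.comp hu).continuousOn (hint t).snd
      (fun s hs => hI s hs.1) fun s _ hs => ?_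
    have hcs : (c s).2 = 0 := by
      simp [c, projSquare, projIcc_of_le_left _ (show (u s).2 ≤ 0 from hs.le)]
    simp [G, sirField, hcs]
  have hsum : (u t).1 + (u t).2 ≤ x + y := by
    have h := intervalIntegral.integral_mono_on ht ((hint t).fst.add (hint t).snd)
      intervalIntegrable_const fun s _ => (show (G s).1 + (G s).2 ≤ 0 by
        simp only [G, sirField]
        nlinarith [mul_nonneg (hρ s).1 (hc s).1.1, mul_nonneg hγ (hc s).2.1])
    rw [intervalIntegral.integral_add (hint t).fst (hint t).snd,
      intervalIntegral.integral_zero] at h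
    rw [hS t ht, hI t ht]
    linarith
  exact ⟨⟨hS₀, by linarith⟩, ⟨hI₀, by linarith⟩⟩

theorem exists_sirSolution_mem_square (hβ : 0 ≤ β) (hγ : 0 ≤ γ) (hρm : Measurable ρ)
    (hρ : ∀ s, ρ s ∈ Icc (0 : ℝ) 1) {x y : ℝ} (hx : 0 ≤ x) (hy : 0 ≤ y) :
    ∃ u : ℝ → ℝ × ℝ, Continuous u ∧ (∀ t, 0 ≤ t → u t ∈ Icc 0 (x + y) ×ˢ Icc 0 (x + y)) ∧
      ∀ t, 0 ≤ t → u t = (x, y) + ∫ s in 0..t, sirField β γ ρ s (u s) := by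
  have hM : 0 ≤ x + y := add_nonneg hx hy
  have hρ' (s : ℝ) : |ρ s| ≤ 1 := abs_le.2 ⟨by linarith [(hρ s).1], (hρ s).2⟩
  have hmeas (u : ℝ → ℝ × ℝ) (hu : Continuous u) :
      AEStronglyMeasurable fun s => sirField β γ ρ s (projSquare _ hM (u s)) :=
    ((measurable_uncurry_sirField hρm).comp (measurable_id.prodMk
      ((lipschitzWith_projSquare hM).continuous.comp hu).measurable)).aestronglyMeasurable
  have hbdd (s : ℝ) (p : ℝ × ℝ) :
      ‖sirField β γ ρ s (projSquare _ hM p)‖ ≤ (β * (x + y) + 1 + γ) * (x + y) :=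
    norm_sirField_le hβ hγ (hρ' s) (norm_le_of_mem_square (projSquare_mem hM p))
  have hlip (s : ℝ) : LipschitzWith (2 * β * (x + y) + 1 + γ).toNNReal
      fun p => sirField β γ ρ s (projSquare _ hM p) := by
    have h := (lipschitzOnWith_sirField hβ hγ (hρ' s) _).comp
      ((lipschitzWith_projSquare hM).lipschitzOnWith (s := univ))
      fun p _ => mem_closedBall_zero_iff.2 (norm_le_of_mem_square (projSquare_mem hM p))
    rwa [mul_one, lipschitzOnWith_univ] at h
  obtain ⟨u, hu, hu_eq⟩ := exists_continuous_eq_add_integral hmeas hbdd hlip (x, y)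
  have hsq (t : ℝ) (ht : 0 ≤ t) : u t ∈ Icc 0 (x + y) ×ˢ Icc 0 (x + y) :=
    mem_square_of_eq_add_integral_projSquare hγ hρ hx hy hu
      (intervalIntegrable_of_norm_le (hmeas u hu) (hbdd · _) 0) hu_eq ht
  refine ⟨u, hu, hsq, fun t ht => ?_⟩
  rw [hu_eq t ht]
  refine congrArg _ (intervalIntegral.integral_congr fun s hs => ?_)
  rw [uIcc_of_le ht] at hs
  simp only [projSquare_eq_self hM (hsq s hs.1)]

theorem intervalIntegrable_sirField (hβ : 0 ≤ β) (hγ : 0 ≤ γ) (hρm : Measurable ρ)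
    (hρ : ∀ s, |ρ s| ≤ 1) {u : ℝ → ℝ × ℝ} {T : ℝ} (hT : 0 ≤ T) (hu : ContinuousOn u (Icc 0 T)) :
    IntervalIntegrable (fun s => sirField β γ ρ s (u s)) volume 0 T := by
  obtain ⟨R, hR⟩ := isCompact_Icc.exists_bound_of_continuousOn hu
  rw [intervalIntegrable_iff_integrableOn_Icc_of_le hT]
  refine Integrable.of_bound ((measurable_uncurry_sirField hρm).comp_aemeasurable
    (aemeasurable_id.prodMk (hu.aestronglyMeasurable measurableSet_Icc).aemeasurable)
    |>.aestronglyMeasurable) ((β * R + 1 + γ) * R) ?_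
  exact (ae_restrict_iff' measurableSet_Icc).2
    (ae_of_all _ fun s hs => norm_sirField_le hβ hγ (hρ s) (hR s hs))

theorem isSIRSol_iff_eq_add_integral (hβ : 0 ≤ β) (hγ : 0 ≤ γ) (hρm : Measurable ρ)
    (hρ : ∀ s, |ρ s| ≤ 1) {x y : ℝ} {S I : ℝ → ℝ} :
    IsSIRSol β γ ρ x y S I ↔ ContinuousOn (fun t => (S t, I t)) (Ici 0) ∧
      ∀ t, 0 ≤ t → (S t, I t) = (x, y) + ∫ s in 0..t, sirField β γ ρ s (S s, I s) := by
  have key (hc : ContinuousOn (fun t => (S t, I t)) (Ici 0)) (t : ℝ) (ht : 0 ≤ t) :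
      (x, y) + ∫ s in 0..t, sirField β γ ρ s (S s, I s) =
        (x - ∫ s in 0..t, (β * S s * I s + ρ s * S s),
          y + ∫ s in 0..t, (β * S s * I s - γ * I s)) := by
    have h := intervalIntegrable_sirField hβ hγ hρm hρ ht (hc.mono Icc_subset_Ici_self)
    ext
    · rw [Prod.fst_add, fst_intervalIntegral h, sub_eq_add_neg, ← intervalIntegral.integral_neg]
      rfl
    · rw [Prod.snd_add, snd_intervalIntegral h]
      rfl
  constructor
  · rintro ⟨hS, hI, hS_eq, hI_eq⟩
    exact ⟨hS.prodMk hI, fun t ht => by rw [key (hS.prodMk hI) t ht, ← hS_eq t ht, ← hI_eq t ht]⟩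
  · rintro ⟨hc, h_eq⟩
    exact ⟨hc.fst, hc.snd, fun t ht => congrArg Prod.fst ((h_eq t ht).trans (key hc t ht)),
      fun t ht => congrArg Prod.snd ((h_eq t ht).trans (key hc t ht))⟩

theorem Admissible.exists_ae_eq_mem_Icc {r : ℝ → ℝ} (hr : Admissible r) :
    ∃ ρ : ℝ → ℝ, Measurable ρ ∧ (∀ s, ρ s ∈ Icc (0 : ℝ) 1) ∧ ∀ᵐ t, 0 ≤ t → r t = ρ t :=
  ⟨fun t => projIcc 0 1 zero_le_one (r t),
    (continuous_subtype_val.comp (continuous_projIcc (h := zero_le_one))).measurable.comp hr.1,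
    fun s => (projIcc 0 1 zero_le_one (r s)).2,
    hr.2.mono fun t ht h₀ => by simp [projIcc_of_mem zero_le_one (ht h₀)]⟩

theorem isSIRSol_congr_ae {r : ℝ → ℝ} (h : ∀ᵐ t, 0 ≤ t → r t = ρ t) {x y : ℝ} {S I : ℝ → ℝ} :
    IsSIRSol β γ r x y S I ↔ IsSIRSol β γ ρ x y S I := by
  have hint (t : ℝ) (ht : 0 ≤ t) : ∫ s in 0..t, (β * S s * I s + r s * S s) =
      ∫ s in 0..t, (β * S s * I s + ρ s * S s) :=
    intervalIntegral.integral_congr_ae <| h.mono fun s hs hmem => by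
      rw [uIoc_of_le ht] at hmem
      rw [hs hmem.1.le]
  unfold IsSIRSol
  exact and_congr_right' <| and_congr_right' <| and_congr_left' <|
    forall₂_congr fun t ht => by rw [hint t ht]

theorem IsSIRSol.unique (hβ : 0 ≤ β) (hγ : 0 ≤ γ) (hρm : Measurable ρ) (hρ : ∀ s, |ρ s| ≤ 1)
    {x y : ℝ} {S₁ I₁ S₂ I₂ : ℝ → ℝ} (h₁ : IsSIRSol β γ ρ x y S₁ I₁)
    (h₂ : IsSIRSol β γ ρ x y S₂ I₂) {T : ℝ} (hT : 0 ≤ T) : S₁ T = S₂ T ∧ I₁ T = I₂ T := by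
  obtain ⟨hc₁, he₁⟩ := (isSIRSol_iff_eq_add_integral hβ hγ hρm hρ).1 h₁
  obtain ⟨hc₂, he₂⟩ := (isSIRSol_iff_eq_add_integral hβ hγ hρm hρ).1 h₂
  replace hc₁ := hc₁.mono (Icc_subset_Ici_self : Icc 0 T ⊆ Ici 0)
  replace hc₂ := hc₂.mono (Icc_subset_Ici_self : Icc 0 T ⊆ Ici 0)
  obtain ⟨R₁, hR₁⟩ := isCompact_Icc.exists_bound_of_continuousOn hc₁
  obtain ⟨R₂, hR₂⟩ := isCompact_Icc.exists_bound_of_continuousOn hc₂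
  have hlip (s : ℝ) (hs : s ∈ Icc 0 T) :
      ‖sirField β γ ρ s (S₁ s, I₁ s) - sirField β γ ρ s (S₂ s, I₂ s)‖ ≤
        (2 * β * max R₁ R₂ + 1 + γ).toNNReal * ‖(S₁ s, I₁ s) - (S₂ s, I₂ s)‖ := by
    simpa [dist_eq_norm] using (lipschitzOnWith_sirField hβ hγ (hρ s) (max R₁ R₂)).dist_le_mul
      _ (mem_closedBall_zero_iff.2 ((hR₁ s hs).trans (le_max_left _ _)))
      _ (mem_closedBall_zero_iff.2 ((hR₂ s hs).trans (le_max_right _ _)))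
  exact Prod.ext_iff.1 <| eqOn_Icc_of_eq_add_integral (NNReal.coe_nonneg _) hc₁ hc₂
    (intervalIntegrable_sirField hβ hγ hρm hρ hT hc₁)
    (intervalIntegrable_sirField hβ hγ hρm hρ hT hc₂) hlip (fun t ht => he₁ t ht.1)
    (fun t ht => he₂ t ht.1) ⟨hT, le_rfl⟩

end SIR

/-- Existence, uniqueness (on `[0,∞)`) and basic properties of the
solution of the controlled SIR system. -/
theorem controlled_SIR_existence_uniqueness
    (β γ : ℝ) (hβ : 0 < β) (hγ : 0 < γ)
    (r : ℝ → ℝ) (hr : Admissible r)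
    (x y : ℝ) (hx : 0 ≤ x) (hy : 0 ≤ y) :
    ∃ S I : ℝ → ℝ,
      IsSIRSol β γ r x y S I ∧
      (∀ S' I' : ℝ → ℝ, IsSIRSol β γ r x y S' I' →
        ∀ t : ℝ, 0 ≤ t → S' t = S t ∧ I' t = I t) ∧
      (∀ t : ℝ, 0 ≤ t → 0 ≤ S t ∧ S t ≤ x + y ∧ 0 ≤ I t ∧ I t ≤ x + y) ∧
      AntitoneOn S (Ici 0) ∧
      (∃ K : NNReal, LipschitzOnWith K S (Ici 0)) ∧
      (∃ K : NNReal, LipschitzOnWith K I (Ici 0)) ∧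
      (∃ (I' : ℝ → ℝ) (K : NNReal),
        (∀ t ∈ Ici (0:ℝ), HasDerivWithinAt I (I' t) (Ici 0) t) ∧
        LipschitzOnWith K I' (Ici 0)) := by
  obtain ⟨ρ, hρm, hρ, hrρ⟩ := hr.exists_ae_eq_mem_Icc
  have hρ' (s : ℝ) : |ρ s| ≤ 1 := abs_le.2 ⟨by linarith [(hρ s).1], (hρ s).2⟩
  obtain ⟨u, hu, hu_sq, hu_eq⟩ := exists_sirSolution_mem_square hβ.le hγ.le hρm hρ hx hy
  have hsol : IsSIRSol β γ ρ x y (fun t => (u t).1) (fun t => (u t).2) :=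
    (isSIRSol_iff_eq_add_integral hβ.le hγ.le hρm hρ').2 ⟨hu.continuousOn, hu_eq⟩
  have hint (t : ℝ) (ht : t ∈ Ici 0) :
      IntervalIntegrable (fun s => sirField β γ ρ s (u s)) volume 0 t :=
    intervalIntegrable_sirField hβ.le hγ.le hρm hρ' ht hu.continuousOn
  have hu_lip : LipschitzOnWith ((β * (x + y) + 1 + γ) * (x + y)).toNNReal u (Ici 0) :=
    lipschitzOnWith_of_eq_add_integral hint (fun s hs => (norm_sirField_le hβ.le hγ.le (hρ' s)
      (norm_le_of_mem_square (hu_sq s hs))).trans (Real.le_coe_toNNReal _)) hu_eq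
  have hS_anti : AntitoneOn (fun t => (u t).1) (Ici 0) :=
    antitoneOn_of_eq_add_integral (fun t ht => (hint t ht).fst)
      (fun s hs => neg_nonpos.2 <| add_nonneg
        (mul_nonneg (mul_nonneg hβ.le (hu_sq s hs).1.1) (hu_sq s hs).2.1)
        (mul_nonneg (hρ s).1 (hu_sq s hs).1.1))
      fun t ht => by rw [hu_eq t ht, Prod.fst_add, fst_intervalIntegral (hint t ht)]
  have hI_deriv (t : ℝ) (ht : t ∈ Ici 0) := hasDerivWithinAt_of_eq_add_integral
    (g := fun t => β * (u t).1 * (u t).2 - γ * (u t).2) (by fun_prop) hsol.2.2.2 ht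
  -- the `I`-component of the field does not depend on time, so we may evaluate it at `0`
  have hI_rate_lip := (LipschitzWith.prod_snd.comp_lipschitzOnWith
    (lipschitzOnWith_sirField hβ.le hγ.le (hρ' 0) (x + y))).comp hu_lip
    fun t ht => mem_closedBall_zero_iff.2 (norm_le_of_mem_square (hu_sq t ht))
  exact ⟨_, _, (isSIRSol_congr_ae hrρ).2 hsol,
    fun S' I' h' t ht => ((isSIRSol_congr_ae hrρ).1 h').unique hβ.le hγ.le hρm hρ' hsol ht,
    fun t ht => ⟨(hu_sq t ht).1.1, (hu_sq t ht).1.2, (hu_sq t ht).2.1, (hu_sq t ht).2.2⟩,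
    hS_anti, ⟨_, LipschitzWith.prod_fst.comp_lipschitzOnWith hu_lip⟩,
    ⟨_, LipschitzWith.prod_snd.comp_lipschitzOnWith hu_lip⟩, _, _, hI_deriv, hI_rate_lip⟩
end
end

section
/- Suppose S, I is the solution of the controlled SIR system for some admissible control r with initial data S(0) ≥ 0 and I(0) > 0. Then the limit lim_{t→∞} S(t) exists and belongs to the half-open interval [0, γ/β), and lim_{t→∞} I(t) = 0. -/
open MeasureTheory Set Filter Topology
open scoped Classical

noncomputable section

/-!
The infected class solves the linear equation `I' = (β S - γ) I`, so
`I t = y * exp (∫₀ᵗ (β S - γ))` stays positive. Then `S' = -(β I + r) S` with a nonnegative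
coefficient, so `S` can neither cross zero nor increase: it converges to some `L ≥ 0`.
If `β S ≥ γ` held throughout, `I` would stay above `y` and `S' ≤ -γ y` would drive `S`
negative; hence `β S(t₀) < γ` at some time `t₀`, which gives `L < γ / β`, and from then on
`∫ (β S - γ)` decreases at least linearly, so `I t → 0` exponentially fast.
-/

theorem ContinuousOn.intervalIntegrable_of_Ici {g : ℝ → ℝ} {a b c : ℝ}
    (hg : ContinuousOn g (Ici a)) (hb : a ≤ b) (hc : a ≤ c) :
    IntervalIntegrable g volume b c :=
  (hg.mono fun _ hu => (le_min hb hc).trans hu.1).intervalIntegrable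

theorem hasDerivWithinAt_integral_Ici {g : ℝ → ℝ} {a b : ℝ} (hg : ContinuousOn g (Ici a))
    (hb : a ≤ b) : HasDerivWithinAt (fun u => ∫ s in a..u, g s) (g b) (Ici b) b := by
  have hsub : Ioi b ⊆ Ici a := fun _ hu => hb.trans hu.le
  refine intervalIntegral.integral_hasDerivWithinAt_right (t := Ioi b)
    (hg.intervalIntegrable_of_Ici le_rfl hb) ?_ ((hg b hb).mono hsub)
  exact ⟨Ici a, mem_of_superset self_mem_nhdsWithin hsub,
    hg.aestronglyMeasurable measurableSet_Ici⟩

theorem eq_mul_exp_integral_of_eq_add_integral {ψ f : ℝ → ℝ} {a y t : ℝ}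
    (hψ : ContinuousOn ψ (Ici a)) (hf : ContinuousOn f (Ici a))
    (h : ∀ t, a ≤ t → f t = y + ∫ s in a..t, ψ s * f s) (ht : a ≤ t) :
    f t = y * Real.exp (∫ s in a..t, ψ s) := by
  set φ : ℝ → ℝ := fun u => ∫ s in a..u, ψ s
  have hφ : ContinuousOn φ (Icc a t) := by
    rw [← uIcc_of_le ht]
    exact intervalIntegral.continuousOn_primitive_interval
      ((hψ.mono fun _ hu => (le_min le_rfl ht).trans hu.1).integrableOn_compact isCompact_uIcc)
  -- `exp (-φ)` is an integrating factor
  have hconst := constant_of_has_deriv_right_zero (f := fun u => f u * Real.exp (-φ u))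
    ((hf.mono Icc_subset_Ici_self).mul hφ.neg.rexp) (fun z hz => by
      have hfz : HasDerivWithinAt f (ψ z * f z) (Ici z) z :=
        ((hasDerivWithinAt_integral_Ici (hψ.mul hf) hz.1).const_add y).congr
          (fun u hu => h u (hz.1.trans hu)) (h z hz.1)
      have hexp : HasDerivWithinAt (fun u => Real.exp (-φ u)) (Real.exp (-φ z) * -ψ z) (Ici z) z :=
        (hasDerivWithinAt_integral_Ici hψ hz.1).neg.exp
      exact (hfz.mul hexp).congr_deriv (by ring)) t ⟨ht, le_rfl⟩
  have hf0 : f a = y := by simpa using h a le_rfl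
  simp only [φ, intervalIntegral.integral_same, neg_zero, Real.exp_zero, mul_one, hf0] at hconst
  rw [← hconst, mul_assoc, ← Real.exp_add, neg_add_cancel, Real.exp_zero, mul_one]

theorem ContinuousOn.nonneg_of_forall_neg_Ioc_imp_le {f : ℝ → ℝ} {a b : ℝ} (hab : a ≤ b)
    (hf : ContinuousOn f (Icc a b)) (ha : 0 ≤ f a)
    (h : ∀ c ∈ Ico a b, (∀ u ∈ Ioc c b, f u < 0) → f c ≤ f b) : 0 ≤ f b := by
  by_contra! hb
  set K := Icc a b ∩ f ⁻¹' Ici 0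
  have hK : IsCompact K := isCompact_Icc.of_isClosed_subset
    (hf.preimage_isClosed_of_isClosed isClosed_Icc isClosed_Ici) inter_subset_left
  -- the last time at which `f` is nonnegative
  have hcK : sSup K ∈ K := hK.sSup_mem ⟨a, ⟨le_rfl, hab⟩, ha⟩
  have hfc : 0 ≤ f (sSup K) := hcK.2
  have hcb : sSup K < b := hcK.1.2.lt_of_ne fun hc => hb.not_ge (hc ▸ hfc)
  have hneg : ∀ u ∈ Ioc (sSup K) b, f u < 0 := fun u hu => by
    by_contra! hu'
    exact (le_csSup hK.bddAbove ⟨⟨hcK.1.1.trans hu.1.le, hu.2⟩, hu'⟩).not_gt hu.1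
  linarith [h _ ⟨hcK.1.1, hcb⟩ hneg]

theorem AntitoneOn.exists_tendsto_atTop_of_Ici {f : ℝ → ℝ} {a m : ℝ} (hf : AntitoneOn f (Ici a))
    (hm : ∀ t, a ≤ t → m ≤ f t) :
    ∃ L, m ≤ L ∧ (∀ t, a ≤ t → L ≤ f t) ∧ Tendsto f atTop (𝓝 L) := by
  set g : ℝ → ℝ := fun t => f (max t a)
  have hg : Antitone g := fun s t hst =>
    hf (le_max_right s a) (le_max_right t a) (max_le_max_right a hst)
  have hgf : ∀ t, a ≤ t → g t = f t := fun t ht => by simp only [g, max_eq_left ht]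
  have hbdd : BddBelow (range g) := ⟨m, forall_mem_range.2 fun t => hm _ (le_max_right t a)⟩
  refine ⟨⨅ t, g t, le_ciInf fun t => hm _ (le_max_right t a),
    fun t ht => hgf t ht ▸ ciInf_le hbdd t, ?_⟩
  exact (tendsto_atTop_ciInf hg hbdd).congr' (eventually_ge_atTop a |>.mono hgf)

theorem Admissible.intervalIntegrable_mul {r g : ℝ → ℝ} (hr : Admissible r)
    (hg : ContinuousOn g (Ici 0)) {a b : ℝ} (ha : 0 ≤ a) (hb : 0 ≤ b) :
    IntervalIntegrable (fun s => r s * g s) volume a b := by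
  have hsub : uIcc a b ⊆ Ici 0 := fun _ hu => (le_min ha hb).trans hu.1
  rw [intervalIntegrable_iff']
  refine IntegrableOn.mul_continuousOn ?_ (hg.mono hsub) isCompact_uIcc
  refine Measure.integrableOn_of_bounded (M := 1) measure_Icc_lt_top.ne
    hr.1.aestronglyMeasurable ((ae_restrict_iff' measurableSet_uIcc).2 ?_)
  filter_upwards [hr.2] with s hs hmem
  obtain ⟨h0, h1⟩ := hs (hsub hmem)
  rwa [Real.norm_eq_abs, abs_of_nonneg h0]

theorem Admissible.ae_restrict_Icc_of_Ioo {r : ℝ → ℝ} (hr : Admissible r) {s t : ℝ} (hs : 0 ≤ s)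
    {p : ℝ → Prop} (hp : ∀ u ∈ Ioo s t, 0 ≤ r u → p u) : ∀ᵐ u ∂volume.restrict (Icc s t), p u := by
  rw [← Measure.restrict_congr_set Ioo_ae_eq_Icc, ae_restrict_iff' measurableSet_Ioo]
  filter_upwards [hr.2] with u hu hmem using hp u hmem (hu (hs.trans hmem.1.le)).1

namespace IsSIRSol

variable {β γ x y : ℝ} {r S I : ℝ → ℝ}

theorem I_eq_mul_exp (h : IsSIRSol β γ r x y S I) {t : ℝ} (ht : 0 ≤ t) :
    I t = y * Real.exp (∫ s in (0:ℝ)..t, (β * S s - γ)) :=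
  eq_mul_exp_integral_of_eq_add_integral ((continuousOn_const.mul h.1).sub continuousOn_const)
    h.2.1 (fun t ht => by simp only [h.2.2.2 t ht, sub_mul]) ht

theorem I_nonneg (h : IsSIRSol β γ r x y S I) (hy : 0 ≤ y) {t : ℝ} (ht : 0 ≤ t) : 0 ≤ I t := by
  rw [h.I_eq_mul_exp ht]; positivity

theorem S_zero (h : IsSIRSol β γ r x y S I) : S 0 = x := by simpa using h.2.2.1 0 le_rfl

theorem intervalIntegrable_outflow (h : IsSIRSol β γ r x y S I) (hr : Admissible r) {a b : ℝ}
    (ha : 0 ≤ a) (hb : 0 ≤ b) :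
    IntervalIntegrable (fun u => β * S u * I u + r u * S u) volume a b :=
  (((continuousOn_const.mul h.1).mul h.2.1).intervalIntegrable_of_Ici ha hb).add
    (hr.intervalIntegrable_mul h.1 ha hb)

theorem S_sub_eq_neg_integral (h : IsSIRSol β γ r x y S I) (hr : Admissible r) {s t : ℝ}
    (hs : 0 ≤ s) (ht : 0 ≤ t) : S t - S s = -∫ u in s..t, (β * S u * I u + r u * S u) := by
  rw [h.2.2.1 t ht, h.2.2.1 s hs, ← intervalIntegral.integral_interval_sub_left
    (h.intervalIntegrable_outflow hr le_rfl ht) (h.intervalIntegrable_outflow hr le_rfl hs)]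
  ring

theorem S_le_sub_mul_of_le_outflow (h : IsSIRSol β γ r x y S I) (hr : Admissible r) {s t m : ℝ}
    (hs : 0 ≤ s) (hst : s ≤ t) (hm : ∀ u ∈ Ioo s t, 0 ≤ r u → m ≤ β * S u * I u + r u * S u) :
    S t ≤ S s - m * (t - s) := by
  have hint := intervalIntegral.integral_mono_ae_restrict hst intervalIntegrable_const
    (h.intervalIntegrable_outflow hr hs (hs.trans hst)) (hr.ae_restrict_Icc_of_Ioo hs hm)
  rw [intervalIntegral.integral_const, smul_eq_mul] at hint
  linarith [h.S_sub_eq_neg_integral hr hs (hs.trans hst)]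

theorem le_S_of_outflow_nonpos (h : IsSIRSol β γ r x y S I) (hr : Admissible r) {s t : ℝ}
    (hs : 0 ≤ s) (hst : s ≤ t) (hF : ∀ u ∈ Ioo s t, 0 ≤ r u → β * S u * I u + r u * S u ≤ 0) :
    S s ≤ S t := by
  have hint := intervalIntegral.integral_mono_ae_restrict hst
    (h.intervalIntegrable_outflow hr hs (hs.trans hst)) intervalIntegrable_const
    (hr.ae_restrict_Icc_of_Ioo hs hF)
  rw [intervalIntegral.integral_const, smul_eq_mul, mul_zero] at hint
  linarith [h.S_sub_eq_neg_integral hr hs (hs.trans hst)]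

theorem S_nonneg (h : IsSIRSol β γ r x y S I) (hr : Admissible r) (hβ : 0 ≤ β) (hx : 0 ≤ x)
    (hy : 0 ≤ y) {t : ℝ} (ht : 0 ≤ t) : 0 ≤ S t := by
  refine ContinuousOn.nonneg_of_forall_neg_Ioc_imp_le ht (h.1.mono Icc_subset_Ici_self)
    (h.S_zero ▸ hx) fun c hc hneg => h.le_S_of_outflow_nonpos hr hc.1 hc.2.le fun u hu hru => ?_
  have hIu := h.I_nonneg hy (hc.1.trans hu.1.le)
  have hSu := hneg u (Ioo_subset_Ioc_self hu)
  nlinarith [mul_nonneg hβ hIu]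

theorem S_antitoneOn (h : IsSIRSol β γ r x y S I) (hr : Admissible r) (hβ : 0 ≤ β) (hx : 0 ≤ x)
    (hy : 0 ≤ y) : AntitoneOn S (Ici 0) := fun s hs t _ hst => by
  have hle := h.S_le_sub_mul_of_le_outflow hr (m := 0) hs hst fun u hu hru => by
    have hu0 : 0 ≤ u := hs.out.trans hu.1.le
    have hSu := h.S_nonneg hr hβ hx hy hu0
    exact add_nonneg (mul_nonneg (mul_nonneg hβ hSu) (h.I_nonneg hy hu0)) (mul_nonneg hru hSu)
  linarith

theorem exists_mul_S_lt (h : IsSIRSol β γ r x y S I) (hr : Admissible r) (hβ : 0 ≤ β)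
    (hγ : 0 < γ) (hx : 0 ≤ x) (hy : 0 < y) : ∃ t, 0 ≤ t ∧ β * S t < γ := by
  by_contra! hSγ
  have hIy : ∀ t, 0 ≤ t → y ≤ I t := fun t ht => by
    rw [h.I_eq_mul_exp ht]
    refine le_mul_of_one_le_right hy.le (Real.one_le_exp ?_)
    exact intervalIntegral.integral_nonneg ht fun u hu => sub_nonneg.2 (hSγ u hu.1)
  -- the bound `S t ≤ x - γ y t` forces `S T ≤ -1`
  set T := (x + 1) / (γ * y)
  have hT : 0 ≤ T := by positivity
  have hST := h.S_le_sub_mul_of_le_outflow hr (m := γ * y) le_rfl hT fun u hu hru => by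
    have hu0 : 0 ≤ u := hu.1.le
    have hSu := h.S_nonneg hr hβ hx hy.le hu0
    nlinarith [hSγ u hu0, hIy u hu0, mul_nonneg hru hSu]
  have hTval : γ * y * T = x + 1 := mul_div_cancel₀ _ (by positivity)
  linarith [h.S_nonneg hr hβ hx hy.le hT, h.S_zero]

theorem tendsto_I_zero (h : IsSIRSol β γ r x y S I) (hr : Admissible r) (hβ : 0 ≤ β)
    (hx : 0 ≤ x) (hy : 0 ≤ y) {t₀ : ℝ} (ht₀ : 0 ≤ t₀) (hlt : β * S t₀ < γ) :
    Tendsto I atTop (𝓝 0) := by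
  set φ : ℝ → ℝ := fun t => ∫ s in (0:ℝ)..t, (β * S s - γ)
  have hψ : ContinuousOn (fun s => β * S s - γ) (Ici 0) :=
    (continuousOn_const.mul h.1).sub continuousOn_const
  have hφ : ∀ t, t₀ ≤ t → φ t ≤ φ t₀ + (t - t₀) * (β * S t₀ - γ) := fun t ht => by
    have hmono : ∫ s in t₀..t, (β * S s - γ) ≤ ∫ s in t₀..t, (β * S t₀ - γ) :=
      intervalIntegral.integral_mono_on ht (hψ.intervalIntegrable_of_Ici ht₀ (ht₀.trans ht))
        intervalIntegrable_const fun u hu => by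
          have hSu := h.S_antitoneOn hr hβ hx hy ht₀ (ht₀.trans hu.1 : 0 ≤ u) hu.1
          exact sub_le_sub_right (mul_le_mul_of_nonneg_left hSu hβ) γ
    rw [intervalIntegral.integral_const, smul_eq_mul] at hmono
    have hsplit := intervalIntegral.integral_add_adjacent_intervals
      (hψ.intervalIntegrable_of_Ici le_rfl ht₀) (hψ.intervalIntegrable_of_Ici ht₀ (ht₀.trans ht))
    simp only [φ]
    linarith
  have hφ_atBot : Tendsto φ atTop atBot := by
    refine tendsto_atBot_mono' atTop ((eventually_ge_atTop t₀).mono hφ) ?_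
    exact tendsto_atBot_add_const_left _ _ <|
      Tendsto.atTop_mul_const_of_neg (sub_neg.2 hlt) (map_sub_atTop_eq t₀).le
  have hlim := (Real.tendsto_exp_atBot.comp hφ_atBot).const_mul y
  rw [mul_zero] at hlim
  exact hlim.congr' ((eventually_ge_atTop 0).mono fun t ht => (h.I_eq_mul_exp ht).symm)

end IsSIRSol

/-- For any solution of the controlled SIR system with `S(0) ≥ 0`
and `I(0) > 0`, the limit of `S` at infinity exists and lies in `[0, γ/β)`, and
`I(t) → 0` as `t → ∞`. -/
theorem controlled_SIR_longtime_limits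
    (β γ : ℝ) (hβ : 0 < β) (hγ : 0 < γ)
    (r : ℝ → ℝ) (hr : Admissible r)
    (x y : ℝ) (hx : 0 ≤ x) (hy : 0 < y)
    (S I : ℝ → ℝ) (hSI : IsSIRSol β γ r x y S I) :
    (∃ L : ℝ, 0 ≤ L ∧ L < γ / β ∧ Tendsto S atTop (𝓝 L)) ∧
    Tendsto I atTop (𝓝 0) := by
  obtain ⟨L, hL0, hLS, hL⟩ := (hSI.S_antitoneOn hr hβ.le hx hy.le).exists_tendsto_atTop_of_Ici
    fun t ht => hSI.S_nonneg hr hβ.le hx hy.le ht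
  obtain ⟨t₀, ht₀, hlt⟩ := hSI.exists_mul_S_lt hr hβ.le hγ hx hy
  exact ⟨⟨L, hL0, (hLS t₀ ht₀).trans_lt ((lt_div_iff₀' hβ).2 hlt), hL⟩,
    hSI.tendsto_I_zero hr hβ.le hx hy.le ht₀ hlt⟩
end
end

section
/- Let r be an admissible control and let S, I be the corresponding solution of the controlled SIR system with S(0) = x > 0 and I(0) = y > μ. Let u = min{t ≥ 0 : I(t) = μ} be the (finite, attained) eradication time. Then β S(u) < γ. -/
open MeasureTheory Set Filter Topology
open scoped Classical

noncomputable section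

/-!
Suppose `γ ≤ β S(u)`, so that `S(u) > 0`. Up to time `u` the infected population stays above
`μ > 0`, and `S' = -(β I + r) S`, so `S` is strictly decreasing wherever it is positive; by
continuity this gives an interval `(t₀, u)` on which `β S > β S(u) ≥ γ`. There
`I' = (β S - γ) I > 0`, hence `I(t₀) < I(u) = μ`, contradicting the minimality of `u`.
-/

lemma Admissible.intervalIntegrable {r : ℝ → ℝ} (hr : Admissible r) {a b : ℝ}
    (ha : 0 ≤ a) (hb : 0 ≤ b) : IntervalIntegrable r volume a b := by
  rw [intervalIntegrable_iff]
  refine IntegrableOn.of_bound measure_Ioc_lt_top hr.1.aestronglyMeasurable 1 ?_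
  filter_upwards [ae_restrict_of_ae hr.2, ae_restrict_mem measurableSet_uIoc] with t hrt ht
  obtain ⟨hr0, hr1⟩ := hrt ((le_min ha hb).trans ht.1.le)
  rw [Real.norm_eq_abs, abs_le]
  constructor <;> linarith

lemma lt_apply_of_lt_of_isLeast {f : ℝ → ℝ} {μ u t : ℝ}
    (hf : ContinuousOn f (Ici 0)) (hf0 : μ < f 0) (hu : IsLeast {t : ℝ | 0 ≤ t ∧ f t = μ} u)
    (ht : 0 ≤ t) (htu : t < u) :
    μ < f t := by
  by_contra! hft
  obtain ⟨s, hs, hfs⟩ := intermediate_value_Icc' ht (hf.mono fun s hs => hs.1)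
    ⟨hft, hf0.le⟩
  exact (hu.2 ⟨hs.1, hfs⟩).not_gt (hs.2.trans_lt htu)

namespace IsSIRSol

variable {β γ : ℝ} {r : ℝ → ℝ} {x y : ℝ} {S I : ℝ → ℝ}

lemma continuousOn_uIcc (hSI : IsSIRSol β γ r x y S I) {a b : ℝ} (ha : 0 ≤ a) (hb : 0 ≤ b) :
    ContinuousOn S (uIcc a b) ∧ ContinuousOn I (uIcc a b) :=
  have hsub : uIcc a b ⊆ Ici 0 := fun _ hs => (le_min ha hb).trans hs.1
  ⟨hSI.1.mono hsub, hSI.2.1.mono hsub⟩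

lemma sub_S_eq_integral (hSI : IsSIRSol β γ r x y S I) (hr : Admissible r) {a b : ℝ}
    (ha : 0 ≤ a) (hb : 0 ≤ b) :
    S a - S b = ∫ s in a..b, (β * S s * I s + r s * S s) := by
  have hint : ∀ c, 0 ≤ c →
      IntervalIntegrable (fun s => β * S s * I s + r s * S s) volume 0 c := fun c hc =>
    have ⟨hS, hI⟩ := hSI.continuousOn_uIcc le_rfl hc
    ((continuousOn_const.mul hS).mul hI).intervalIntegrable.add
      ((hr.intervalIntegrable le_rfl hc).mul_continuousOn hS)
  rw [hSI.2.2.1 a ha, hSI.2.2.1 b hb, ← intervalIntegral.integral_interval_sub_left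
    (hint b hb) (hint a ha)]
  ring

lemma sub_I_eq_integral (hSI : IsSIRSol β γ r x y S I) {a b : ℝ} (ha : 0 ≤ a) (hb : 0 ≤ b) :
    I b - I a = ∫ s in a..b, (β * S s * I s - γ * I s) := by
  have hint : ∀ c, 0 ≤ c →
      IntervalIntegrable (fun s => β * S s * I s - γ * I s) volume 0 c := fun c hc =>
    have ⟨hS, hI⟩ := hSI.continuousOn_uIcc le_rfl hc
    (((continuousOn_const.mul hS).mul hI).sub (continuousOn_const.mul hI)).intervalIntegrable
  rw [hSI.2.2.2 a ha, hSI.2.2.2 b hb, ← intervalIntegral.integral_interval_sub_left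
    (hint b hb) (hint a ha)]
  ring

lemma S_lt_of_pos (hSI : IsSIRSol β γ r x y S I) (hr : Admissible r) (hβ : 0 < β) {a b : ℝ}
    (ha : 0 ≤ a) (hab : a < b) (hS : ∀ s ∈ Icc a b, 0 < S s)
    (hI : ∀ s ∈ Icc a b, 0 < I s) : S b < S a := by
  have ⟨hSc, hIc⟩ := hSI.continuousOn_uIcc ha (ha.trans hab.le)
  have hinfection_int : IntervalIntegrable (fun s => β * S s * I s) volume a b :=
    ((continuousOn_const.mul hSc).mul hIc).intervalIntegrable
  have hinfection : 0 < ∫ s in a..b, β * S s * I s :=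
    intervalIntegral.intervalIntegral_pos_of_pos_on hinfection_int
      (fun s hs => mul_pos (mul_pos hβ (hS s (Ioo_subset_Icc_self hs)))
        (hI s (Ioo_subset_Icc_self hs))) hab
  have hvaccination :
      ∫ s in a..b, β * S s * I s ≤ ∫ s in a..b, (β * S s * I s + r s * S s) := by
    refine intervalIntegral.integral_mono_ae_restrict hab.le hinfection_int
      (hinfection_int.add ((hr.intervalIntegrable ha (ha.trans hab.le)).mul_continuousOn hSc)) ?_
    filter_upwards [ae_restrict_of_ae hr.2, ae_restrict_mem measurableSet_Icc] with s hrs hs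
    exact le_add_of_nonneg_right (mul_nonneg (hrs (ha.trans hs.1)).1 (hS s hs).le)
  linarith [hSI.sub_S_eq_integral hr ha (ha.trans hab.le)]

lemma I_lt_of_gamma_lt (hSI : IsSIRSol β γ r x y S I) {a b : ℝ} (ha : 0 ≤ a) (hab : a < b)
    (hS : ∀ s ∈ Ioo a b, γ < β * S s) (hI : ∀ s ∈ Ioo a b, 0 < I s) : I a < I b := by
  have ⟨hSc, hIc⟩ := hSI.continuousOn_uIcc ha (ha.trans hab.le)
  have hgrowth : 0 < ∫ s in a..b, (β * S s * I s - γ * I s) :=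
    intervalIntegral.intervalIntegral_pos_of_pos_on
      (((continuousOn_const.mul hSc).mul hIc).sub
        (continuousOn_const.mul hIc)).intervalIntegrable
      (fun s hs => by nlinarith [hS s hs, hI s hs]) hab
  linarith [hSI.sub_I_eq_integral ha (ha.trans hab.le)]

end IsSIRSol

theorem beta_S_eradication_lt_gamma_general
    (β γ μ : ℝ) (hβ : 0 < β) (hγ : 0 < γ) (hμ : 0 < μ)
    (r : ℝ → ℝ) (hr : Admissible r)
    (x y : ℝ) (hy : μ < y)
    (S I : ℝ → ℝ) (hSI : IsSIRSol β γ r x y S I)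
    (u : ℝ) (hu : IsLeast {t : ℝ | 0 ≤ t ∧ I t = μ} u) :
    β * S u < γ := by
  by_contra! hγ_le
  have hI0 : μ < I 0 := by simpa [hSI.2.2.2 0 le_rfl] using hy
  have hIμ : ∀ t, 0 ≤ t → t < u → μ < I t := fun t ht htu =>
    lt_apply_of_lt_of_isLeast hSI.2.1 hI0 hu ht htu
  have hu0 : 0 < u := hu.1.1.lt_of_ne fun h => by linarith [hu.1.2, h ▸ hI0]
  have hIpos : ∀ s ∈ Icc 0 u, 0 < I s := fun s hs =>
    hs.2.lt_or_eq.elim (fun hsu => hμ.trans (hIμ s hs.1 hsu)) fun hsu => hsu ▸ hu.1.2 ▸ hμ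
  have hSu : 0 < S u := pos_of_mul_pos_right (hγ.trans_le hγ_le) hβ.le
  obtain ⟨t₀, ht₀u, hSpos⟩ : ∃ t₀, t₀ < u ∧ Icc t₀ u ⊆ {s | 0 < S s} :=
    mem_nhdsLE_iff_exists_Icc_subset.1 <| nhdsWithin_le_nhds <|
      (hSI.1.continuousAt (Ici_mem_nhds hu0)).eventually_const_lt hSu
  set a := max t₀ 0
  have ha0 : 0 ≤ a := le_max_right _ _
  have hau : a < u := max_lt ht₀u hu0
  have hSgt : ∀ s ∈ Ioo a u, γ < β * S s := fun s hs =>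
    hγ_le.trans_lt <| mul_lt_mul_of_pos_left (hSI.S_lt_of_pos hr hβ (ha0.trans hs.1.le) hs.2
      (fun v hv => hSpos ⟨(le_max_left _ _).trans (hs.1.le.trans hv.1), hv.2⟩)
      (fun v hv => hIpos v ⟨ha0.trans (hs.1.le.trans hv.1), hv.2⟩)) hβ
  have hIau : I a < I u := hSI.I_lt_of_gamma_lt ha0 hau hSgt
    fun s hs => hIpos s ⟨ha0.trans hs.1.le, hs.2.le⟩
  linarith [hIμ a ha0 hau, hu.1.2]

/-- At the eradication time `u = min {t ≥ 0 : I(t) = μ}` one has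
`β S(u) < γ`. -/
theorem beta_S_eradication_lt_gamma
    (β γ μ : ℝ) (hβ : 0 < β) (hγ : 0 < γ) (hμ : 0 < μ)
    (r : ℝ → ℝ) (hr : Admissible r)
    (x y : ℝ) (hx : 0 < x) (hy : μ < y)
    (S I : ℝ → ℝ) (hSI : IsSIRSol β γ r x y S I)
    (u : ℝ) (hu : IsLeast {t : ℝ | 0 ≤ t ∧ I t = μ} u) :
    β * S u < γ :=
  beta_S_eradication_lt_gamma_general β γ μ hβ hγ hμ r hr x y hy S I hSI u hu
end
end

section
/- For every admissible control r and every x ≥ 0, y ≥ μ, the eradication time satisfies 0 ≤ u^r(x,y) ≤ (x + y)/(μ γ). -/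
open MeasureTheory Set Filter Topology
open scoped Classical

noncomputable section

section AuxLemmas

open intervalIntegral

/-- Grönwall-type lemma: a continuous function dominated by `K` times the integral of
its own absolute value vanishes identically. -/
lemma gronwall_zero {f : ℝ → ℝ} {a b K : ℝ} (hab : a ≤ b) (hK : 0 ≤ K)
    (hf : ContinuousOn f (Icc a b))
    (h : ∀ t ∈ Icc a b, |f t| ≤ K * ∫ s in a..t, |f s|) :
    ∀ t ∈ Icc a b, f t = 0 := by
  obtain ⟨M, hM⟩ := isCompact_Icc.exists_bound_of_continuousOn hf
  simp only [Real.norm_eq_abs] at hM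
  have key : ∀ n : ℕ, ∀ t ∈ Icc a b, |f t| ≤ M * K ^ n / n.factorial * (t - a) ^ n := by
    intro n
    induction n with
    | zero => intro t ht; simpa using hM t ht
    | succ n ih =>
      intro t ht
      have hat : a ≤ t := ht.1
      have habs : IntervalIntegrable (fun s => |f s|) volume a t :=
        ContinuousOn.intervalIntegrable_of_Icc hat
          ((hf.mono (Icc_subset_Icc le_rfl ht.2)).abs)
      have hcont : Continuous fun s : ℝ => M * K ^ n / n.factorial * (s - a) ^ n :=
        continuous_const.mul ((continuous_id.sub continuous_const).pow n)
      have h1 : ∫ s in a..t, |f s| ≤ ∫ s in a..t, M * K ^ n / n.factorial * (s - a) ^ n := by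
        apply integral_mono_on hat habs (hcont.intervalIntegrable _ _)
        intro s hs; exact ih s ⟨hs.1, hs.2.trans ht.2⟩
      have h2 : ∫ s in a..t, M * K ^ n / n.factorial * (s - a) ^ n
          = M * K ^ n / n.factorial * ((t - a) ^ (n + 1) / (n + 1)) := by
        rw [intervalIntegral.integral_const_mul]
        rw [intervalIntegral.integral_comp_sub_right (fun u => u ^ n) a]
        rw [show a - a = (0:ℝ) by ring, integral_pow, zero_pow (Nat.succ_ne_zero n), sub_zero]
      have hfact : ((n.factorial : ℝ)) ≠ 0 := Nat.cast_ne_zero.mpr n.factorial_ne_zero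
      have hn1 : ((n : ℝ) + 1) ≠ 0 := by positivity
      calc |f t| ≤ K * ∫ s in a..t, |f s| := h t ht
        _ ≤ K * (M * K ^ n / n.factorial * ((t - a) ^ (n + 1) / (n + 1))) := by
            rw [← h2]; exact mul_le_mul_of_nonneg_left h1 hK
        _ = M * K ^ (n + 1) / (n + 1).factorial * (t - a) ^ (n + 1) := by
            push_cast [Nat.factorial_succ]
            field_simp
            ring
  intro t ht
  have hrw : (fun n : ℕ => M * K ^ n / n.factorial * (t - a) ^ n)
      = fun n : ℕ => M * ((K * (t - a)) ^ n / n.factorial) := by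
    funext n; rw [mul_pow]; ring
  have hlim : Filter.Tendsto (fun n : ℕ => M * K ^ n / n.factorial * (t - a) ^ n)
      Filter.atTop (nhds 0) := by
    rw [hrw]
    have := (FloorSemiring.tendsto_pow_div_factorial_atTop (K * (t - a))).const_mul M
    simpa using this
  have h0 : |f t| ≤ 0 :=
    ge_of_tendsto hlim (Filter.Eventually.of_forall fun n => key n t ht)
  exact abs_nonpos_iff.mp h0

/-- Integrability of the SIR drift `β S I + r S` on subintervals of `[0,∞)`. -/
lemma sir_integrable_aux (β : ℝ) {r S I : ℝ → ℝ} (hrm : Measurable r)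
    (hr01 : ∀ᵐ t : ℝ ∂volume, 0 ≤ t → 0 ≤ r t ∧ r t ≤ 1)
    (hS : ContinuousOn S (Ici 0)) (hI : ContinuousOn I (Ici 0))
    {a b : ℝ} (ha : 0 ≤ a) (hab : a ≤ b) :
    IntervalIntegrable (fun s => β * S s * I s + r s * S s) volume a b := by
  have hsub : Ioc a b ⊆ Ici (0:ℝ) := fun s hs => ha.trans hs.1.le
  have hsub' : Icc a b ⊆ Ici (0:ℝ) := fun s hs => ha.trans hs.1
  obtain ⟨Cs, hCs⟩ := isCompact_Icc.exists_bound_of_continuousOn (hS.mono hsub')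
  obtain ⟨Ci, hCi⟩ := isCompact_Icc.exists_bound_of_continuousOn (hI.mono hsub')
  simp only [Real.norm_eq_abs] at hCs hCi
  have hCs0 : 0 ≤ Cs := le_trans (abs_nonneg _) (hCs a ⟨le_rfl, hab⟩)
  have hCi0 : 0 ≤ Ci := le_trans (abs_nonneg _) (hCi a ⟨le_rfl, hab⟩)
  rw [intervalIntegrable_iff_integrableOn_Ioc_of_le hab]
  have hSm : AEStronglyMeasurable S (volume.restrict (Ioc a b)) :=
    (hS.mono hsub).aestronglyMeasurable measurableSet_Ioc
  have hIm : AEStronglyMeasurable I (volume.restrict (Ioc a b)) :=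
    (hI.mono hsub).aestronglyMeasurable measurableSet_Ioc
  have hmeas : AEStronglyMeasurable (fun s => β * S s * I s + r s * S s)
      (volume.restrict (Ioc a b)) :=
    ((aestronglyMeasurable_const.mul hSm).mul hIm).add (hrm.aestronglyMeasurable.mul hSm)
  apply Integrable.mono' (integrable_const (|β| * Cs * Ci + Cs)) hmeas
  filter_upwards [ae_restrict_mem measurableSet_Ioc, ae_restrict_of_ae hr01] with s hs hrs
  have hs0 : (0:ℝ) ≤ s := ha.trans hs.1.le
  obtain ⟨hr0, hr1⟩ := hrs hs0
  have h1 := hCs s ⟨hs.1.le, hs.2⟩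
  have h2 := hCi s ⟨hs.1.le, hs.2⟩
  rw [Real.norm_eq_abs]
  calc |β * S s * I s + r s * S s| ≤ |β * S s * I s| + |r s * S s| := abs_add_le _ _
    _ = |β| * |S s| * |I s| + |r s| * |S s| := by rw [abs_mul, abs_mul, abs_mul]
    _ ≤ |β| * Cs * Ci + Cs := by
        have hrabs : |r s| ≤ 1 := by rw [abs_of_nonneg hr0]; exact hr1
        have e1 : |β| * |S s| * |I s| ≤ |β| * Cs * Ci :=
          mul_le_mul (mul_le_mul le_rfl h1 (abs_nonneg _) (abs_nonneg _)) h2 (abs_nonneg _)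
            (by positivity)
        have e2 : |r s| * |S s| ≤ 1 * Cs :=
          mul_le_mul hrabs h1 (abs_nonneg _) zero_le_one
        linarith

end AuxLemmas

/-- If `(S, I)` solves the controlled SIR system, then `I` hits the threshold `μ`
by time `(x + y) / (μ γ)`. -/
lemma sir_hits (β γ μ : ℝ) (hβ : 0 < β) (hγ : 0 < γ) (hμ : 0 < μ)
    (r : ℝ → ℝ) (hr : Admissible r) (x y : ℝ) (hx : 0 ≤ x) (hy : μ ≤ y)
    {S I : ℝ → ℝ} (hsol : IsSIRSol β γ r x y S I) :
    ∃ t ∈ Icc (0:ℝ) ((x + y) / (μ * γ)), I t = μ := by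
  obtain ⟨hS, hI, hSeq, hIeq⟩ := hsol
  obtain ⟨hrm, hr01⟩ := hr
  set T : ℝ := (x + y) / (μ * γ) with hTdef
  have hxy : 0 < x + y := by linarith
  have hμγ : μ * γ ≠ 0 := by positivity
  have hT : 0 ≤ T := by rw [hTdef]; exact div_nonneg hxy.le (by positivity)
  have hS0 : S 0 = x := by simpa using hSeq 0 le_rfl
  have hI0 : I 0 = y := by simpa using hIeq 0 le_rfl
  have hIccT : Icc (0:ℝ) T ⊆ Ici 0 := fun s hs => hs.1
  by_contra hcon
  push_neg at hcon
  -- `I` stays above `μ` on `[0, T]`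
  have hIgt : ∀ t ∈ Icc (0:ℝ) T, μ < I t := by
    intro t ht
    rcases lt_or_ge μ (I t) with h | h
    · exact h
    rcases eq_or_lt_of_le h with h' | h'
    · exact absurd h' (hcon t ht)
    · have hsub2 : Icc (0:ℝ) t ⊆ Ici 0 := fun s hs => hs.1
      have hivt := intermediate_value_Icc' ht.1 (hI.mono hsub2)
      have hmem : μ ∈ Icc (I t) (I 0) := ⟨le_of_lt h', by rw [hI0]; exact hy⟩
      obtain ⟨s, hs, hsI⟩ := hivt hmem
      exact absurd hsI (hcon s ⟨hs.1, hs.2.trans ht.2⟩)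
  obtain ⟨Ci, hCi⟩ := isCompact_Icc.exists_bound_of_continuousOn (hI.mono hIccT)
  simp only [Real.norm_eq_abs] at hCi
  have hCi0 : 0 ≤ Ci := le_trans (abs_nonneg _) (hCi 0 ⟨le_rfl, hT⟩)
  set K : ℝ := β * Ci + 1 with hKdef
  have hK : 0 ≤ K := by rw [hKdef]; nlinarith
  -- `S` is nonnegative on `[0, T]`
  have hSnn : ∀ t ∈ Icc (0:ℝ) T, 0 ≤ S t := by
    by_contra hcon2
    push_neg at hcon2
    obtain ⟨t₁, ht₁, hneg⟩ := hcon2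
    have h0t₁ : 0 ≤ t₁ := ht₁.1
    set Z : Set ℝ := Icc 0 t₁ ∩ S ⁻¹' (Iic 0) with hZdef
    have hZclosed : IsClosed Z :=
      ContinuousOn.preimage_isClosed_of_isClosed
        (hS.mono (fun s hs => hs.1)) isClosed_Icc isClosed_Iic
    have ht₁Z : t₁ ∈ Z := ⟨⟨h0t₁, le_rfl⟩, hneg.le⟩
    have hbdd : BddBelow Z := ⟨0, fun z hz => hz.1.1⟩
    set c : ℝ := sInf Z with hcdef
    have hcZ : c ∈ Z := hZclosed.csInf_mem ⟨t₁, ht₁Z⟩ hbdd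
    have hc0 : 0 ≤ c := hcZ.1.1
    have hct₁ : c ≤ t₁ := hcZ.1.2
    have hSc_le : S c ≤ 0 := hcZ.2
    have hSc : S c = 0 := by
      rcases eq_or_lt_of_le hc0 with h0c | h0c
      · rw [← h0c] at hSc_le ⊢
        rw [hS0] at hSc_le ⊢
        exact le_antisymm hSc_le hx
      · have hpos' : ∀ s ∈ Ico (0:ℝ) c, 0 < S s := by
          intro s hs
          by_contra hsn
          push_neg at hsn
          have hsZ : s ∈ Z := ⟨⟨hs.1, hs.2.le.trans hct₁⟩, hsn⟩
          exact absurd (csInf_le hbdd hsZ) (not_le.mpr hs.2)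
        have hmemcl : c ∈ closure (Ico (0:ℝ) c) := by
          rw [closure_Ico (ne_of_lt h0c)]
          exact ⟨hc0, le_rfl⟩
        have hnb : (nhdsWithin c (Ico (0:ℝ) c)).NeBot :=
          mem_closure_iff_nhdsWithin_neBot.mp hmemcl
        have htend : Filter.Tendsto S (nhdsWithin c (Ico (0:ℝ) c)) (nhds (S c)) :=
          (hS c hc0).mono (fun s hs => hs.1)
        have h0Sc : 0 ≤ S c :=
          ge_of_tendsto htend
            (Filter.eventually_of_mem self_mem_nhdsWithin fun s hs => (hpos' s hs).le)
        exact le_antisymm hSc_le h0Sc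
    -- Grönwall on `[c, t₁]`
    have hzero : ∀ t ∈ Icc c t₁, S t = 0 := by
      apply gronwall_zero hct₁ hK (hS.mono (fun s hs => hc0.trans hs.1))
      intro t ht
      have hct : c ≤ t := ht.1
      have h0t : 0 ≤ t := hc0.trans hct
      have htT : t ≤ T := ht.2.trans ht₁.2
      have hint1 := sir_integrable_aux β hrm hr01 hS hI le_rfl hc0
      have hint2 := sir_integrable_aux β hrm hr01 hS hI hc0 hct
      have hadd : (∫ s in (0:ℝ)..c, (β * S s * I s + r s * S s))
            + ∫ s in c..t, (β * S s * I s + r s * S s)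
          = ∫ s in (0:ℝ)..t, (β * S s * I s + r s * S s) :=
        intervalIntegral.integral_add_adjacent_intervals hint1 hint2
      have e1 := hSeq t h0t
      have e2 := hSeq c hc0
      rw [hSc] at e2
      have heq : S t = - ∫ s in c..t, (β * S s * I s + r s * S s) := by linarith
      have hKScont : ContinuousOn (fun s : ℝ => K * |S s|) (Icc c t) :=
        continuousOn_const.mul ((hS.mono (fun s hs => hc0.trans hs.1)).mono
          (Icc_subset_Icc le_rfl ht.2)).abs
      calc |S t| = |∫ s in c..t, (β * S s * I s + r s * S s)| := by rw [heq, abs_neg]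
        _ ≤ ∫ s in c..t, |β * S s * I s + r s * S s| :=
            intervalIntegral.abs_integral_le_integral_abs hct
        _ ≤ ∫ s in c..t, K * |S s| := by
            apply intervalIntegral.integral_mono_ae_restrict hct hint2.abs
              (hKScont.intervalIntegrable_of_Icc hct)
            filter_upwards [ae_restrict_mem measurableSet_Icc, ae_restrict_of_ae hr01]
              with s hs hrs
            have hs0 : (0:ℝ) ≤ s := hc0.trans hs.1
            obtain ⟨hr0, hr1⟩ := hrs hs0
            have hci := hCi s ⟨hs0, hs.2.trans htT⟩
            have hfac : β * S s * I s + r s * S s = (β * I s + r s) * S s := by ring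
            rw [hfac, abs_mul]
            have hb : |β * I s + r s| ≤ K := by
              calc |β * I s + r s| ≤ |β * I s| + |r s| := abs_add_le _ _
                _ ≤ K := by
                    rw [abs_mul, abs_of_pos hβ, abs_of_nonneg hr0, hKdef]
                    have := mul_le_mul_of_nonneg_left hci hβ.le
                    linarith
            exact mul_le_mul_of_nonneg_right hb (abs_nonneg _)
        _ = K * ∫ s in c..t, |S s| := intervalIntegral.integral_const_mul _ _
    have hfin := hzero t₁ ⟨hct₁, le_rfl⟩
    linarith
  -- final contradiction: total mass decreases at rate at least `γ μ`
  have hk_int : IntervalIntegrable (fun s => β * S s * I s - γ * I s) volume 0 T :=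
    ContinuousOn.intervalIntegrable_of_Icc hT
      (((continuousOn_const.mul (hS.mono hIccT)).mul (hI.mono hIccT)).sub
        (continuousOn_const.mul (hI.mono hIccT)))
  have hh_int := sir_integrable_aux β hrm hr01 hS hI le_rfl hT
  have hfun : (fun s => r s * S s + γ * I s)
      = fun s => (β * S s * I s + r s * S s) - (β * S s * I s - γ * I s) := by
    funext s; ring
  have hg_int : IntervalIntegrable (fun s => r s * S s + γ * I s) volume 0 T := by
    rw [hfun]; exact hh_int.sub hk_int
  have hsum : S T + I T = x + y - ∫ s in (0:ℝ)..T, (r s * S s + γ * I s) := by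
    rw [hSeq T hT, hIeq T hT, hfun, intervalIntegral.integral_sub hh_int hk_int]
    ring
  have hmono : ∫ s in (0:ℝ)..T, (γ * μ) ≤ ∫ s in (0:ℝ)..T, (r s * S s + γ * I s) := by
    apply intervalIntegral.integral_mono_ae_restrict hT intervalIntegrable_const hg_int
    filter_upwards [ae_restrict_mem measurableSet_Icc, ae_restrict_of_ae hr01] with s hs hrs
    obtain ⟨hr0, _⟩ := hrs hs.1
    have h1 := hIgt s hs
    have h2 := hSnn s hs
    have h3 : 0 ≤ r s * S s := mul_nonneg hr0 h2
    nlinarith [mul_lt_mul_of_pos_left h1 hγ]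
  have hconst : ∫ s in (0:ℝ)..T, (γ * μ) = x + y := by
    rw [intervalIntegral.integral_const, smul_eq_mul, sub_zero, hTdef, mul_comm γ μ,
      div_mul_cancel₀ _ hμγ]
  have hST := hSnn T ⟨hT, le_rfl⟩
  have hIT := hIgt T ⟨hT, le_rfl⟩
  rw [hconst] at hmono
  linarith

/-- The eradication time satisfies `0 ≤ u^r(x,y) ≤ (x+y)/(μ γ)`. -/
theorem eradTime_upper_bound
    (β γ μ : ℝ) (hβ : 0 < β) (hγ : 0 < γ) (hμ : 0 < μ)
    (r : ℝ → ℝ) (hr : Admissible r)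
    (x y : ℝ) (hx : 0 ≤ x) (hy : μ ≤ y) :
    0 ≤ eradTime β γ μ r x y ∧ eradTime β γ μ r x y ≤ (x + y) / (μ * γ) := by
  constructor
  · rw [eradTime]
    exact Real.sInf_nonneg (fun t ht => ht.1)
  · rw [eradTime, sirI]
    by_cases h : ∃ p : (ℝ → ℝ) × (ℝ → ℝ), IsSIRSol β γ r x y p.1 p.2
    · rw [dif_pos h]
      obtain ⟨t, ht, hIt⟩ := sir_hits β γ μ hβ hγ hμ r hr x y hx hy h.choose_spec
      have h1 : sInf {t : ℝ | 0 ≤ t ∧ h.choose.2 t = μ} ≤ t :=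
        csInf_le ⟨0, fun z hz => hz.1⟩ ⟨ht.1, hIt⟩
      exact h1.trans ht.2
    · rw [dif_neg h]
      have he : {t : ℝ | 0 ≤ t ∧ (0 : ℝ → ℝ) t = μ} = ∅ := by
        ext t
        simp only [mem_setOf_eq, mem_empty_iff_false, iff_false, not_and, Pi.zero_apply]
        exact fun _ h' => absurd h'.symm hμ.ne'
      rw [he, Real.sInf_empty]
      have : 0 < x + y := by linarith
      positivity
end
end
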